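/- arXiv:2502.14596 — 5 statements merged into one kernel-verified Lean document; each statement's English description precedes it below -/
import Mathlib

section
/- Let S_1(z) = 1 - z and S_k(z) = S_{k-1}(z) - z/S_{k-1}(z) for k ≥ 2, and let z_k* be the smallest positive real number with S_k(z_k*) = 0. Then for every k ≥ 1, z_k* ≥ k - √(k² - 1). -/
open Real Finset

/-- The sequence of functions `S_k`, with `S 1 z = 1 - z` and
`S k z = S (k-1) z - z / S (k-1) z` for `k ≥ 2`.  (`S 0` is junk.) -/
noncomputable def S : ℕ → ℝ → ℝ
  | 0, z => 1 - z
  | 1, z => 1 - z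
  | (k + 2), z => S (k + 1) z - z / S (k + 1) z

lemma S_lower (n : ℕ) (z : ℝ) (hz : 0 < z) (hz1 : z < 1)
    (hQ : 0 < z ^ 2 - 2 * n * z + 1) :
    ∀ j, 1 ≤ j → j ≤ n → Real.sqrt (z ^ 2 - 2 * j * z + 1) ≤ S j z := by
  intro j hj
  induction j, hj using Nat.le_induction with
  | base =>
    intro _
    have h1 : z ^ 2 - 2 * ((1 : ℕ) : ℝ) * z + 1 = (1 - z) ^ 2 := by push_cast; ring
    rw [h1, Real.sqrt_sq (by linarith)]
    simp [S]
  | succ j hj ih =>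
    intro hjn
    have hjn' : j ≤ n := le_trans (Nat.le_succ j) hjn
    have ihj := ih hjn'
    have hjn2 : (j : ℝ) + 1 ≤ (n : ℝ) := by exact_mod_cast hjn
    have hQj : z < z ^ 2 - 2 * j * z + 1 := by nlinarith
    have hQjpos : 0 < z ^ 2 - 2 * j * z + 1 := lt_trans hz hQj
    set A := Real.sqrt (z ^ 2 - 2 * j * z + 1) with hA
    have hA2 : A ^ 2 = z ^ 2 - 2 * j * z + 1 := Real.sq_sqrt hQjpos.le
    have hApos : 0 < A := Real.sqrt_pos.mpr hQjpos
    have hSpos : 0 < S j z := lt_of_lt_of_le hApos ihj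
    have hAz : A * (z / A) = z := mul_div_cancel₀ z hApos.ne'
    have hzA : z / A ≤ A := by
      rw [div_le_iff₀ hApos]; nlinarith
    have hA0 : 0 ≤ A - z / A := by linarith
    have hdiv : z / S j z ≤ z / A := by gcongr
    have hSrec : S (j + 1) z = S j z - z / S j z := by
      cases j with
      | zero => omega
      | succ m => rfl
    have h2 : z ^ 2 - 2 * ((j : ℝ) + 1) * z + 1 ≤ (A - z / A) ^ 2 := by
      nlinarith [sq_nonneg (z / A)]
    have key : Real.sqrt (z ^ 2 - 2 * ((j : ℝ) + 1) * z + 1) ≤ A - z / A := by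
      calc Real.sqrt (z ^ 2 - 2 * ((j : ℝ) + 1) * z + 1)
          ≤ Real.sqrt ((A - z / A) ^ 2) := Real.sqrt_le_sqrt h2
        _ = A - z / A := Real.sqrt_sq hA0
    push_cast
    rw [hSrec]
    linarith

theorem stmt2 (k : ℕ) (hk : 1 ≤ k) (zk : ℝ)
    (hzk : IsLeast {z : ℝ | 0 < z ∧ S k z = 0} zk) :
    (k : ℝ) - Real.sqrt ((k : ℝ) ^ 2 - 1) ≤ zk := by
  obtain ⟨⟨hz0, hS0⟩, -⟩ := hzk
  by_contra hcon
  push_neg at hcon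
  have hk1 : (1 : ℝ) ≤ (k : ℝ) := by exact_mod_cast hk
  have hks : 0 ≤ (k : ℝ) ^ 2 - 1 := by nlinarith
  have hsq : Real.sqrt ((k : ℝ) ^ 2 - 1) ^ 2 = (k : ℝ) ^ 2 - 1 := Real.sq_sqrt hks
  have hsnn : 0 ≤ Real.sqrt ((k : ℝ) ^ 2 - 1) := Real.sqrt_nonneg _
  have hlow : (k : ℝ) - 1 ≤ Real.sqrt ((k : ℝ) ^ 2 - 1) := by
    nlinarith [hsq, hsnn, hk1]
  have h1 : 0 < (k : ℝ) - zk - Real.sqrt ((k : ℝ) ^ 2 - 1) := by linarith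
  have h2 : 0 < (k : ℝ) - zk + Real.sqrt ((k : ℝ) ^ 2 - 1) := by linarith
  have hQ : 0 < zk ^ 2 - 2 * k * zk + 1 := by nlinarith [mul_pos h1 h2, hsq]
  have hz1 : zk < 1 := by linarith
  have hS := S_lower k zk hz0 hz1 hQ k hk le_rfl
  rw [hS0] at hS
  have hpos : 0 < Real.sqrt (zk ^ 2 - 2 * k * zk + 1) := Real.sqrt_pos.mpr hQ
  linarith
end

section
/- Let S_1(z) = 1 - z and S_k(z) = S_{k-1}(z) - z/S_{k-1}(z) for k ≥ 2. Then for every k ≥ 1, S_k(1/(2k)) ≤ (1/(4k))^{1/4}. -/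
open Real Finset

section

variable {z : ℝ} {i j k : ℕ}

lemma S_succ_eq (hj : 1 ≤ j) : S (j + 1) z = S j z - z / S j z := by
  obtain ⟨i, rfl⟩ := Nat.exists_eq_add_of_le' hj
  rfl

lemma S_succ_eq_div (hj : 1 ≤ j) (h : S j z ≠ 0) : S (j + 1) z = (S j z ^ 2 - z) / S j z := by
  rw [S_succ_eq hj]
  field_simp

lemma S_sq_succ (hj : 1 ≤ j) (h : S j z ≠ 0) :
    S (j + 1) z ^ 2 = S j z ^ 2 - 2 * z + z ^ 2 / S j z ^ 2 := by
  rw [S_succ_eq hj]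
  field_simp
  ring

lemma S_succ_le (hj : 1 ≤ j) (hz : 0 ≤ z) (h : 0 < S j z) : S (j + 1) z ≤ S j z := by
  rw [S_succ_eq hj]
  linarith [div_nonneg hz h.le]

lemma S_sq_eq_sum (hk : 1 ≤ k) (h : ∀ j ∈ Ico 1 k, S j z ≠ 0) :
    S k z ^ 2 = 1 - 2 * k * z + z ^ 2 + ∑ j ∈ Ico 1 k, z ^ 2 / S j z ^ 2 := by
  induction k, hk using Nat.le_induction with
  | base => simp only [S, Nat.cast_one, Ico_self, sum_empty]; ring
  | succ n hn ih =>
    have hn0 : S n z ≠ 0 := h n (mem_Ico.2 ⟨hn, n.lt_succ_self⟩)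
    rw [S_sq_succ hn hn0, sum_Ico_succ_top hn]
    push_cast
    linarith [ih fun j hj ↦ h j (Ico_subset_Ico_right n.le_succ hj)]

/-- Positivity holds on `2jz ≤ 1` because there `S j² ≥ 1 - 2jz + z²` leaves room for one more
step: `S j² > z` whenever `2(j+1)z ≤ 1`. -/
lemma S_pos (hz : 0 < z) (hj : 1 ≤ j) (hjz : 2 * j * z ≤ 1) : 0 < S j z := by
  suffices 0 < S j z ∧ 1 - 2 * j * z + z ^ 2 ≤ S j z ^ 2 from this.1
  induction j, hj using Nat.le_induction with
  | base => simp only [S, Nat.cast_one] at hjz ⊢; constructor <;> nlinarith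
  | succ n hn ih =>
    push_cast at hjz
    obtain ⟨hpos, hsq⟩ := ih (by linarith)
    refine ⟨?_, ?_⟩
    · rw [S_succ_eq_div hn hpos.ne']
      exact div_pos (by nlinarith) hpos
    · rw [S_sq_succ hn hpos.ne']
      push_cast
      linarith [div_nonneg (sq_nonneg z) (sq_nonneg (S n z))]

lemma S_le_of_le (hz : 0 < z) (hi : 1 ≤ i) (hij : i ≤ j) (hjz : 2 * j * z ≤ 1) :
    S j z ≤ S i z := by
  induction j, hij using Nat.le_induction with
  | base => rfl
  | succ n hn ih =>
    push_cast at hjz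
    have hnz : 2 * n * z ≤ 1 := by linarith
    exact (S_succ_le (hi.trans hn) hz.le (S_pos hz (hi.trans hn) hnz)).trans (ih hnz)

lemma S_le_one (hz : 0 < z) (hj : 1 ≤ j) (hjz : 2 * j * z ≤ 1) : S j z ≤ 1 := by
  have h1 : S 1 z = 1 - z := rfl
  linarith [S_le_of_le hz le_rfl hj hjz]

lemma S_pow_four_le (hz : 0 < z) (hk : 1 ≤ k) (hkz : 2 * k * z ≤ 1) :
    S k z ^ 4 ≤ 1 - 2 * k * z + k * z ^ 2 := by
  have hpos := S_pos hz hk hkz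
  have hpos_lt : ∀ j ∈ Ico 1 k, 0 < S j z := fun j hj ↦ by
    obtain ⟨hj1, hjk⟩ := mem_Ico.1 hj
    exact S_pos hz hj1 (le_trans (by gcongr) hkz)
  have hsum : ∑ j ∈ Ico 1 k, z ^ 2 / S j z ^ 2 ≤ (k - 1) * (z ^ 2 / S k z ^ 2) := by
    have hcard : ((#(Ico 1 k) : ℕ) : ℝ) = k - 1 := by
      rw [Nat.card_Ico, Nat.cast_sub hk, Nat.cast_one]
    rw [← hcard, ← nsmul_eq_mul]
    refine sum_le_card_nsmul _ _ _ fun j hj ↦ ?_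
    obtain ⟨hj1, hjk⟩ := mem_Ico.1 hj
    gcongr
    exact S_le_of_le hz hj1 hjk.le hkz
  have hsq := S_sq_eq_sum hk fun j hj ↦ (hpos_lt j hj).ne'
  have hS2 : S k z ^ 2 ≤ 1 := pow_le_one₀ hpos.le (S_le_one hz hk hkz)
  have hmul : (k - 1) * (z ^ 2 / S k z ^ 2) * S k z ^ 2 = (k - 1) * z ^ 2 := by
    field_simp
  calc S k z ^ 4 = S k z ^ 2 * S k z ^ 2 := by ring
    _ ≤ (1 - 2 * k * z + z ^ 2 + (k - 1) * (z ^ 2 / S k z ^ 2)) * S k z ^ 2 := by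
        gcongr
        linarith
    _ = (1 - 2 * k * z + z ^ 2) * S k z ^ 2 + (k - 1) * z ^ 2 := by rw [add_mul, hmul]
    _ ≤ (1 - 2 * k * z + z ^ 2) * 1 + (k - 1) * z ^ 2 := by
        gcongr
    _ = 1 - 2 * k * z + k * z ^ 2 := by ring

end

theorem stmt3 (k : ℕ) (hk : 1 ≤ k) :
    S k (1 / (2 * k)) ≤ (1 / (4 * (k : ℝ))) ^ ((1 : ℝ) / 4) := by
  have hk0 : (0 : ℝ) < k := by exact_mod_cast hk
  have hz : (0 : ℝ) < 1 / (2 * k) := by positivity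
  have hkz : 2 * k * (1 / (2 * k : ℝ)) = 1 := by field_simp
  have h4 := S_pow_four_le hz hk hkz.le
  rw [hkz, show (k : ℝ) * (1 / (2 * k)) ^ 2 = 1 / (4 * k) by field_simp; ring] at h4
  rw [one_div 4, Real.le_rpow_inv_iff_of_pos (S_pos hz hk hkz.le).le (by positivity) four_pos]
  exact_mod_cast (by linarith : S k (1 / (2 * k)) ^ 4 ≤ 1 / (4 * (k : ℝ)))
end

section
/- For positive integers n and k, the number W_{2n}(T_k) of closed walks of length 2n in the regular leaning tree T_k that begin and end at the root equals G_{n+1,k+1} − G_{n+1,k}, the number of (n+1)-node planted plane trees with strictly decreasing labels and root label exactly k+1. -/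
/-- The regular leaning tree of order `k` as a graph.  Vertices are subsets of
`{0, ..., k-1}` (the root is `∅`), and the children of a vertex `S` are the
sets `insert j S` with `j` smaller than every element of `S`; thus the root
`∅` has subtrees that are leaning trees of orders `k-1, k-2, ..., 0`. -/
def leaningGraph (k : ℕ) : SimpleGraph (Finset (Fin k)) where
  Adj S T := (∃ j ∉ S, T = insert j S ∧ ∀ i ∈ S, j < i) ∨
    (∃ j ∉ T, S = insert j T ∧ ∀ i ∈ T, j < i)
  symm := ⟨fun S T h => h.symm⟩
  loopless := by
    constructor
    intro S h
    rcases h with ⟨j, hj, hT, -⟩ | ⟨j, hj, hT, -⟩ <;>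
      exact hj (by rw [hT]; exact Finset.mem_insert_self j S)

/-- A planted plane tree with natural-number labels: a labelled root together
with an ordered list of labelled subtrees. -/
inductive LTree where
  | node : ℕ → List LTree → LTree

/-- The label of the root. -/
def LTree.label : LTree → ℕ
  | .node l _ => l

/-- The number of nodes. -/
def LTree.size : LTree → ℕ
  | .node _ c => 1 + (c.attach.map (fun t => LTree.size t.1)).sum
decreasing_by have := List.sizeOf_lt_of_mem t.2; simp at *; omega

/-- Labels strictly decrease along every root-to-leaf path, i.e. every child's
label is strictly smaller than its parent's label. -/
inductive LTree.Dec : LTree → Prop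
  | node (l : ℕ) (c : List LTree) (h1 : ∀ t ∈ c, t.label < l)
      (h2 : ∀ t ∈ c, LTree.Dec t) : LTree.Dec (.node l c)

/-- All labels belong to {1, ..., k}. -/
inductive LTree.Bounded (k : ℕ) : LTree → Prop
  | node (l : ℕ) (c : List LTree) (h1 : 1 ≤ l) (h2 : l ≤ k)
      (h : ∀ t ∈ c, LTree.Bounded k t) : LTree.Bounded k (.node l c)

/-- `Gcount n k` is the number of planted plane trees on `n` nodes with labels
from `{1, ..., k}` that strictly decrease along every root-to-leaf path. -/
noncomputable def Gcount (n k : ℕ) : ℕ :=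
  Set.ncard {t : LTree | t.size = n ∧ t.Dec ∧ t.Bounded k}

/-!
A closed walk at a vertex `S` of the leaning tree that stays in the subtree below `S` splits,
at its returns to `S`, into excursions. An excursion steps down to a child `insert j S`, whose
subtree is the leaning tree `T_j`, performs such a closed walk there, and comes back through the
same edge. Recording it as a node labelled `j + 1` whose subtrees encode the inner walk is a
bijection from these walks onto the forests of plane trees whose labels decrease downwards and
are at most the order of the subtree below `S`; a walk of length `2n` gives a forest with `n`
nodes. At the root, adding a root labelled `k + 1` to a forest for `T_k` gives exactly the trees
counted by `G_{n+1,k+1}` but not by `G_{n+1,k}`.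
-/

namespace LTree

/-- The form of `t.Dec ∧ t.Bounded m` (see `decBounded_iff`) that recursion along the tree
can use. -/
inductive DecBounded : ℕ → LTree → Prop
  | node (m l : ℕ) (c : List LTree) (hl : 1 ≤ l) (hlm : l ≤ m)
      (hc : ∀ t ∈ c, DecBounded (l - 1) t) : DecBounded m (.node l c)

theorem size_node (l : ℕ) (c : List LTree) : (node l c).size = 1 + (c.map size).sum := by
  rw [size]
  simp

theorem decBounded_node_iff {m l : ℕ} {c : List LTree} :
    (node l c).DecBounded m ↔ 1 ≤ l ∧ l ≤ m ∧ ∀ t ∈ c, t.DecBounded (l - 1) :=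
  ⟨fun ⟨_, _, _, hl, hlm, hc⟩ => ⟨hl, hlm, hc⟩, fun ⟨hl, hlm, hc⟩ => .node m l c hl hlm hc⟩

theorem DecBounded.mono {m m' : ℕ} {t : LTree} (h : t.DecBounded m) (hm : m ≤ m') :
    t.DecBounded m' :=
  let ⟨_, l, c, hl, hlm, hc⟩ := h
  .node m' l c hl (hlm.trans hm) hc

theorem DecBounded.label_le {m : ℕ} {t : LTree} (h : t.DecBounded m) : t.label ≤ m :=
  let ⟨_, _, _, _, hlm, _⟩ := h
  hlm

theorem DecBounded.decBounded_label {m : ℕ} {t : LTree} (h : t.DecBounded m) :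
    t.DecBounded t.label :=
  let ⟨_, l, c, hl, _, hc⟩ := h
  .node l l c hl le_rfl hc

theorem Bounded.mono {m m' : ℕ} {t : LTree} (h : t.Bounded m) (hm : m ≤ m') : t.Bounded m' := by
  induction h with
  | node l c hl hlm _ ih => exact .node l c hl (hlm.trans hm) ih

theorem decBounded_iff {m : ℕ} {t : LTree} : t.DecBounded m ↔ t.Dec ∧ t.Bounded m := by
  constructor
  · intro h
    induction h with
    | node m l c hl hlm hc ih =>
      refine ⟨.node l c (fun t ht => ?_) fun t ht => (ih t ht).1,
        .node l c hl hlm fun t ht => (ih t ht).2.mono (by omega)⟩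
      have := (hc t ht).label_le
      omega
  · rintro ⟨hd, hb⟩
    induction hd generalizing m with
    | node l c hlt _ ih =>
      obtain ⟨_, _, hl, hlm, hb⟩ := hb
      exact .node m l c hl hlm fun t ht =>
        (ih t ht (hb t ht)).decBounded_label.mono (by have := hlt t ht; omega)

theorem decBounded_add_one_iff {m : ℕ} {t : LTree} :
    t.DecBounded (m + 1) ↔
      t.DecBounded m ∨ ∃ c, t = node (m + 1) c ∧ ∀ s ∈ c, s.DecBounded m := by
  obtain ⟨l, c⟩ := t
  simp only [decBounded_node_iff, node.injEq]
  constructor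
  · rintro ⟨hl, hlm, hc⟩
    rcases hlm.lt_or_eq with hlm | rfl
    · exact Or.inl ⟨hl, by omega, hc⟩
    · exact Or.inr ⟨c, ⟨rfl, rfl⟩, hc⟩
  · rintro (⟨hl, hlm, hc⟩ | ⟨c, ⟨rfl, rfl⟩, hc⟩)
    · exact ⟨hl, by omega, hc⟩
    · exact ⟨by omega, le_rfl, hc⟩

end LTree

namespace SimpleGraph.Walk

variable {V : Type*} {G : SimpleGraph V}

theorem exists_first_exit (P : V → Prop) {u v : V} :
    ∀ (p : G.Walk u v), P u → ¬ P v → ∃ (a b : V) (q : G.Walk u a) (h : G.Adj a b)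
      (r : G.Walk b v), (∀ y ∈ q.support, P y) ∧ ¬ P b ∧ p = q.append (cons h r)
  | nil, hu, hv => absurd hu hv
  | cons (v := w) h p, hu, hv => by
    by_cases hw : P w
    · obtain ⟨a, b, q, h', r, hq, hb, rfl⟩ := exists_first_exit P p hw hv
      exact ⟨a, b, cons h q, h', r, by simp_all, hb, rfl⟩
    · exact ⟨u, w, nil, h, p, by simpa using hu, hw, rfl⟩

theorem append_cons_inj {u a b v : V} {p p' : G.Walk u a} {h h' : G.Adj a b}
    {q q' : G.Walk b v} (hp : b ∉ p.support) (hp' : b ∉ p'.support)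
    (he : p.append (cons h q) = p'.append (cons h' q')) : p = p' ∧ q = q' := by
  induction p with
  | nil =>
    cases p' with
    | nil => simpa using he
    | cons _ p' =>
      simp only [nil_append, cons_append, cons.injEq] at he
      obtain ⟨rfl, -⟩ := he
      simp at hp'
  | cons _ p ih =>
    cases p' with
    | nil =>
      simp only [nil_append, cons_append, cons.injEq] at he
      obtain ⟨rfl, -⟩ := he
      simp at hp
    | cons _ p' =>
      simp only [cons_append, cons.injEq] at he
      obtain ⟨rfl, he⟩ := he
      obtain ⟨rfl, rfl⟩ := ih (by simp_all) (by simp_all) (eq_of_heq he)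
      exact ⟨rfl, rfl⟩

end SimpleGraph.Walk

namespace LeaningTree

open SimpleGraph Walk Finset

variable {k : ℕ}

/-- The subtree of `leaningGraph k` below `S` is the leaning tree of order
`subtreeOrder S = min k (min S)`: the children of `S` are the `insert j S` with
`j < subtreeOrder S`. -/
def subtreeOrder (S : Finset (Fin k)) : ℕ :=
  (insert k (S.image Fin.val)).min' (insert_nonempty _ _)

theorem lt_subtreeOrder_iff {S : Finset (Fin k)} {m : ℕ} :
    m < subtreeOrder S ↔ m < k ∧ ∀ i ∈ S, m < i := by
  simp [subtreeOrder, lt_min'_iff]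

theorem subtreeOrder_empty : subtreeOrder (∅ : Finset (Fin k)) = k := by
  simp [subtreeOrder]

theorem subtreeOrder_insert {S : Finset (Fin k)} {j : Fin k} (hj : ∀ i ∈ S, j < i) :
    subtreeOrder (insert j S) = j :=
  eq_of_forall_lt_iff fun m => by
    simp only [lt_subtreeOrder_iff, mem_insert, forall_eq_or_imp]
    exact ⟨fun h => h.2.1, fun h => ⟨h.trans j.2, h, fun i hi => h.trans (hj i hi)⟩⟩

theorem adj_insert {S : Finset (Fin k)} {j : Fin k} (hj : ∀ i ∈ S, j < i) :
    (leaningGraph k).Adj S (insert j S) :=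
  Or.inl ⟨j, fun h => (hj j h).false, rfl, hj⟩

theorem exists_eq_insert_of_adj_of_subset {S V : Finset (Fin k)}
    (h : (leaningGraph k).Adj S V) (hSV : S ⊆ V) : ∃ j, (∀ i ∈ S, j < i) ∧ V = insert j S := by
  rcases h with ⟨j, -, rfl, hj⟩ | ⟨j, hjV, rfl, -⟩
  · exact ⟨j, hj, rfl⟩
  · exact absurd (hSV (mem_insert_self _ _)) hjV

/-- The subtree below `insert j S` is `{W | W.filter (j ≤ ·) = insert j S}`, and the only
edge leaving it is the one up to `S`. -/
theorem eq_insert_of_adj_of_filter_eq {S W V : Finset (Fin k)} {j : Fin k}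
    (hj : ∀ i ∈ S, j < i) (hadj : (leaningGraph k).Adj W V)
    (hW : W.filter (j ≤ ·) = insert j S) (hV : V.filter (j ≤ ·) ≠ insert j S) :
    W = insert j S ∧ V = S := by
  rcases hadj with ⟨x, -, rfl, hx⟩ | ⟨x, hxV, rfl, hx⟩
  · have hjW : j ∈ W := (mem_filter.1 (hW ▸ mem_insert_self j S)).1
    exact absurd (by rw [filter_insert, if_neg (not_le.2 (hx j hjW)), hW]) hV
  · rw [filter_insert] at hW
    split_ifs at hW with hjx
    · obtain rfl : x = j := by
        rcases mem_insert.1 (hW ▸ mem_insert_self j S) with hxj | hjV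
        · exact hxj.symm
        · exact absurd (hx j (mem_filter.1 hjV).1) (not_lt.2 hjx)
      rw [filter_true_of_mem fun i hi => (hx i hi).le] at hW
      refine ⟨hW, ?_⟩
      rw [← erase_insert hxV, hW, erase_insert fun h => (hj x h).false]
    · exact absurd hW hV

/-- A tree with root label `j + 1` at `S` becomes the excursion down to `insert j S`, the walk
of its subtrees there and the step back up; a tree that does not fit below `S` is skipped. -/
def forestWalk : List LTree → (S : Finset (Fin k)) → (leaningGraph k).Walk S S
  | [], _ => nil
  | .node l c :: ts, S =>
    if h : 1 ≤ l ∧ l ≤ subtreeOrder S then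
      have hl : l - 1 < k ∧ ∀ i ∈ S, l - 1 < i := lt_subtreeOrder_iff.1 (by omega)
      have hj : ∀ i ∈ S, (⟨l - 1, hl.1⟩ : Fin k) < i := hl.2
      cons (adj_insert hj) ((forestWalk c (insert _ S)).append
        (cons (adj_insert hj).symm (forestWalk ts S)))
    else forestWalk ts S

@[simp] theorem forestWalk_nil (S : Finset (Fin k)) : forestWalk [] S = nil := by
  rw [forestWalk]

theorem forestWalk_cons_node {S : Finset (Fin k)} {j : Fin k} (hj : ∀ i ∈ S, j < i)
    (c ts : List LTree) :
    forestWalk (.node (j + 1) c :: ts) S =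
      cons (adj_insert hj) ((forestWalk c (insert j S)).append
        (cons (adj_insert hj).symm (forestWalk ts S))) := by
  rw [forestWalk, dif_pos ⟨by omega, Nat.add_one_le_iff.2 (lt_subtreeOrder_iff.2 ⟨j.2, hj⟩)⟩]
  rfl

theorem decBounded_subtreeOrder_node_iff {S : Finset (Fin k)} {l : ℕ} {c : List LTree} :
    (LTree.node l c).DecBounded (subtreeOrder S) ↔ ∃ j : Fin k, (∀ i ∈ S, j < i) ∧
      l = j + 1 ∧ ∀ t ∈ c, t.DecBounded (subtreeOrder (insert j S)) := by
  rw [LTree.decBounded_node_iff]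
  constructor
  · rintro ⟨hl, hlm, hc⟩
    obtain ⟨hk, hS⟩ := lt_subtreeOrder_iff.1 (show l - 1 < subtreeOrder S by omega)
    exact ⟨⟨l - 1, hk⟩, hS, by simp only; omega, by rwa [subtreeOrder_insert hS]⟩
  · rintro ⟨j, hj, rfl, hc⟩
    rw [subtreeOrder_insert hj] at hc
    exact ⟨by omega, Nat.add_one_le_iff.2 (lt_subtreeOrder_iff.2 ⟨j.2, hj⟩), hc⟩

theorem subset_of_mem_support_forestWalk :
    ∀ (c : List LTree) (S : Finset (Fin k)), ∀ y ∈ (forestWalk c S).support, S ⊆ y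
  | [], S => by simp
  | .node l c :: ts, S => by
    rw [forestWalk]
    split_ifs
    · simp only [support_cons, List.mem_cons, mem_support_append_iff]
      rintro y (rfl | hy | rfl | hy)
      exacts [subset_rfl, (subset_insert _ _).trans (subset_of_mem_support_forestWalk c _ y hy),
        subset_insert _ _, subset_of_mem_support_forestWalk ts S y hy]
    · exact subset_of_mem_support_forestWalk ts S

theorem notMem_support_forestWalk_insert {S : Finset (Fin k)} {j : Fin k}
    (hj : ∀ i ∈ S, j < i) (c : List LTree) : S ∉ (forestWalk c (insert j S)).support :=
  fun h => (hj j (subset_of_mem_support_forestWalk c _ S h (mem_insert_self j S))).false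

theorem length_forestWalk : ∀ (c : List LTree) {S : Finset (Fin k)},
    (∀ t ∈ c, t.DecBounded (subtreeOrder S)) →
      (forestWalk c S).length = 2 * (c.map LTree.size).sum
  | [], S, _ => by simp
  | .node l c :: ts, S, h => by
    obtain ⟨j, hj, rfl, hc⟩ := decBounded_subtreeOrder_node_iff.1 (h _ (List.mem_cons_self ..))
    rw [forestWalk_cons_node hj, length_cons, length_append, length_cons,
      length_forestWalk c hc, length_forestWalk ts fun s hs => h s (List.mem_cons_of_mem _ hs)]
    simp only [List.map_cons, List.sum_cons, LTree.size_node]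
    ring

theorem eq_of_forestWalk_eq {S : Finset (Fin k)} :
    ∀ {c c' : List LTree}, (∀ t ∈ c, t.DecBounded (subtreeOrder S)) →
      (∀ t ∈ c', t.DecBounded (subtreeOrder S)) → forestWalk c S = forestWalk c' S → c = c'
  | [], [], _, _, _ => rfl
  | [], .node _ _ :: _, _, h', he => by
    obtain ⟨j, hj, rfl, -⟩ := decBounded_subtreeOrder_node_iff.1 (h' _ (List.mem_cons_self ..))
    simp [forestWalk_cons_node hj] at he
  | .node _ _ :: _, [], h, _, he => by
    obtain ⟨j, hj, rfl, -⟩ := decBounded_subtreeOrder_node_iff.1 (h _ (List.mem_cons_self ..))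
    simp [forestWalk_cons_node hj] at he
  | .node _ c₁ :: ts, .node _ c₁' :: ts', h, h', he => by
    obtain ⟨j, hj, rfl, hc₁⟩ := decBounded_subtreeOrder_node_iff.1 (h _ (List.mem_cons_self ..))
    obtain ⟨j', hj', rfl, hc₁'⟩ :=
      decBounded_subtreeOrder_node_iff.1 (h' _ (List.mem_cons_self ..))
    rw [forestWalk_cons_node hj, forestWalk_cons_node hj', cons.injEq] at he
    obtain ⟨hjj', he⟩ := he
    obtain rfl : j = j' := by
      rcases mem_insert.1 (hjj' ▸ mem_insert_self j S) with hjj' | hjS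
      exacts [hjj', absurd (hj j hjS) (lt_irrefl j)]
    obtain ⟨he₁, he₂⟩ := append_cons_inj (notMem_support_forestWalk_insert hj c₁)
      (notMem_support_forestWalk_insert hj c₁') (eq_of_heq he)
    rw [eq_of_forestWalk_eq hc₁ hc₁' he₁,
      eq_of_forestWalk_eq (fun t ht => h t (List.mem_cons_of_mem _ ht))
        (fun t ht => h' t (List.mem_cons_of_mem _ ht)) he₂]

theorem exists_forestWalk_eq {S : Finset (Fin k)} (p : (leaningGraph k).Walk S S)
    (hp : ∀ y ∈ p.support, S ⊆ y) :
    ∃ c : List LTree, (∀ t ∈ c, t.DecBounded (subtreeOrder S)) ∧ forestWalk c S = p := by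
  induction hlen : p.length using Nat.strong_induction_on generalizing S p with
  | _ n ih =>
  cases p with
  | nil => exact ⟨[], by simp, forestWalk_nil S⟩
  | cons hadj r =>
    obtain ⟨j, hj, rfl⟩ := exists_eq_insert_of_adj_of_subset hadj (hp _ (by simp))
    have hjS : j ∉ S := fun h => (hj j h).false
    obtain ⟨a, b, q, h, r', hq, hb, rfl⟩ :=
      r.exists_first_exit (fun y => y.filter (j ≤ ·) = insert j S)
        (by rw [filter_insert, if_pos le_rfl, filter_true_of_mem fun i hi => (hj i hi).le])
        (fun h => hjS (mem_filter.1 (h ▸ mem_insert_self j S)).1)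
    obtain ⟨rfl, rfl⟩ := eq_insert_of_adj_of_filter_eq hj h (hq _ q.end_mem_support) hb
    simp only [length_cons, length_append] at hlen
    obtain ⟨c₁, hc₁, rfl⟩ :=
      ih q.length (by omega) q (fun y hy => hq y hy ▸ filter_subset _ _) rfl
    obtain ⟨c₂, hc₂, rfl⟩ := ih r'.length (by omega) r' (fun y hy => hp y (by simp [hy])) rfl
    refine ⟨.node (j + 1) c₁ :: c₂, ?_, ?_⟩
    · rintro t (_ | ⟨_, ht⟩)
      exacts [decBounded_subtreeOrder_node_iff.2 ⟨j, hj, rfl, hc₁⟩, hc₂ t ht]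
    · rw [forestWalk_cons_node hj]

def forestSet (m n : ℕ) : Set (List LTree) :=
  {c | (∀ t ∈ c, t.DecBounded m) ∧ (c.map LTree.size).sum = n}

noncomputable def forestSetEquivWalks (k n : ℕ) :
    forestSet k n ≃ {p : (leaningGraph k).Walk ∅ ∅ // p.length = 2 * n} :=
  Equiv.ofBijective
    (fun c => ⟨forestWalk c.1 ∅, by
      rw [length_forestWalk c.1 (subtreeOrder_empty ▸ c.2.1), c.2.2]⟩)
    ⟨fun c c' he => Subtype.ext <| eq_of_forestWalk_eq (subtreeOrder_empty ▸ c.2.1)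
        (subtreeOrder_empty ▸ c'.2.1) (congrArg Subtype.val he),
      fun ⟨p, hp⟩ => by
        obtain ⟨c, hc, rfl⟩ := exists_forestWalk_eq p fun y _ => empty_subset y
        rw [subtreeOrder_empty] at hc
        refine ⟨⟨c, hc, ?_⟩, rfl⟩
        rw [length_forestWalk c (subtreeOrder_empty ▸ hc)] at hp
        omega⟩

theorem forestSet_finite (m n : ℕ) : (forestSet m n).Finite := by
  classical
  exact Set.finite_coe_iff.1 (Finite.of_equiv _ (forestSetEquivWalks m n).symm)

theorem setOf_decBounded_finite (m n : ℕ) :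
    {t : LTree | t.size = n ∧ t.DecBounded m}.Finite :=
  ((forestSet_finite m n).preimage List.singleton_injective.injOn).subset
    fun t ⟨hn, ht⟩ => ⟨by simpa using ht, by simpa using hn⟩

theorem Gcount_eq_ncard (n k : ℕ) :
    Gcount n k = {t : LTree | t.size = n ∧ t.DecBounded k}.ncard := by
  simp [Gcount, LTree.decBounded_iff]

theorem Gcount_add_one (n m : ℕ) :
    Gcount (n + 1) (m + 1) = Gcount (n + 1) m + (forestSet m n).ncard := by
  have hsplit : {t : LTree | t.size = n + 1 ∧ t.DecBounded (m + 1)} =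
      {t | t.size = n + 1 ∧ t.DecBounded m} ∪ LTree.node (m + 1) '' forestSet m n := by
    ext t
    simp only [Set.mem_ofPred_eq, Set.mem_union, Set.mem_image, LTree.decBounded_add_one_iff,
      forestSet]
    constructor
    · rintro ⟨hn, ht | ⟨c, rfl, hc⟩⟩
      · exact Or.inl ⟨hn, ht⟩
      · exact Or.inr ⟨c, ⟨hc, by rw [LTree.size_node] at hn; omega⟩, rfl⟩
    · rintro (⟨hn, ht⟩ | ⟨c, ⟨hc, hn⟩, rfl⟩)
      · exact ⟨hn, Or.inl ht⟩
      · exact ⟨by rw [LTree.size_node]; omega, Or.inr ⟨c, rfl, hc⟩⟩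
  have hdisj : Disjoint {t : LTree | t.size = n + 1 ∧ t.DecBounded m}
      (LTree.node (m + 1) '' forestSet m n) := by
    rw [Set.disjoint_left]
    rintro _ ⟨-, ht⟩ ⟨c, -, rfl⟩
    exact absurd ht.label_le (by simp [LTree.label])
  rw [Gcount_eq_ncard, Gcount_eq_ncard, hsplit,
    Set.ncard_union_eq hdisj (setOf_decBounded_finite m _) ((forestSet_finite m n).image _),
    Set.ncard_image_of_injective _ fun _ _ h => (LTree.node.inj h).2]

end LeaningTree

theorem stmt13_general (n k : ℕ) :
    Nat.card {p : (leaningGraph k).Walk ∅ ∅ // p.length = 2 * n} =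
      Gcount (n + 1) (k + 1) - Gcount (n + 1) k := by
  rw [Nat.card_congr (LeaningTree.forestSetEquivWalks k n).symm, Nat.card_coe_set_eq,
    LeaningTree.Gcount_add_one, Nat.add_sub_cancel_left]

theorem stmt13 (n k : ℕ) (hn : 1 ≤ n) (hk : 1 ≤ k) :
    Nat.card {p : (leaningGraph k).Walk ∅ ∅ // p.length = 2 * n} =
      Gcount (n + 1) (k + 1) - Gcount (n + 1) k :=
  stmt13_general n k
end

section
/- Let T be a rooted unordered tree with adjacency matrix A, and let A_{UH(T)−1} be the adjacency matrix of the regular leaning tree of order UH(T)−1. Then λ₁(A) ≤ λ₁(A_{UH(T)−1}). -/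
/-!
Reorder the children of `t` so that its plane Ulam–Harris number is `UH t`, and send each node to
the set of numbers `UH t - j`, `j` running over the labels of the nodes on its root path (root
excluded). Labels strictly increase along a path and lie in `(1, UH t]`, so this is an injective
graph map into the regular leaning tree of order `UH t - 1`, whose vertices are the subsets of
`{0, …, UH t - 2}` and whose children are obtained by adding a new smallest element.

The largest adjacency eigenvalue is monotone under injective graph maps `f : G → H`: for every `x`,
`xᵀ A_G x ≤ |x|ᵀ A_G |x|`, the push-forward of `|x|` along `f` has the same norm and at least the
same quadratic form for `A_H`, and `λ₁(A) = max xᵀAx / xᵀx`.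
-/

open Matrix

/-- An (unlabelled) planted plane tree: a root with an ordered list of subtrees. -/
inductive PTree where
  | node : List PTree → PTree

/-- The list of subtrees of the root. -/
def PTree.children : PTree → List PTree
  | .node c => c

/-- The number of nodes. -/
def PTree.size : PTree → ℕ
  | .node c => 1 + (c.attach.map (fun t => PTree.size t.1)).sum
decreasing_by have := List.sizeOf_lt_of_mem t.2; simp at *; omega

/-- The regular leaning tree of order `k`: `T 0` is a single node, and the
root of `T (k+1)` has subtrees `T k, T (k-1), ..., T 0` in that order. -/
def leaning : ℕ → PTree
  | 0 => .node []
  | (k + 1) => .node (leaning k :: (leaning k).children)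

/-- `uhL r l` is the maximum Ulam–Harris label occurring in the forest `l`,
when the first root of `l` receives label `r`, subsequent roots receive labels
`r + 1, r + 2, ...`, and the children of a node labelled `s` receive labels
`s + 1, s + 2, ...`. -/
def uhL : ℕ → List PTree → ℕ
  | _, [] => 0
  | r, (.node c) :: ts => max r (max (uhL (r + 1) c) (uhL (r + 1) ts))

/-- The Ulam–Harris number of a planted plane tree (root labelled `1`). -/
def planeUH (t : PTree) : ℕ := uhL 1 [t]

/-- `maxDegL l` is the maximum, over all nodes `v` of trees in the forest `l`,
of the degree of `v` in the planted tree (number of children plus one, the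
root being attached to an extra planting edge). -/
def maxDegL : List PTree → ℕ
  | [] => 0
  | (.node c) :: ts => max (c.length + 1) (max (maxDegL c) (maxDegL ts))

/-- The maximum vertex degree of a planted plane tree. -/
def maxDeg (t : PTree) : ℕ := maxDegL [t]

/-- Two plane trees represent the same unordered rooted tree: one can be
obtained from the other by reordering the children of each node. -/
inductive TEquiv : PTree → PTree → Prop
  | node (c d l : List PTree) (h1 : List.Forall₂ TEquiv c l) (h2 : l.Perm d) :
      TEquiv (.node c) (.node d)

/-- The Ulam–Harris number of an unordered rooted tree: the minimum of the
plane Ulam–Harris number over all plane orderings. -/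
noncomputable def UH (t : PTree) : ℕ :=
  sInf {m : ℕ | ∃ t', TEquiv t t' ∧ planeUH t' = m}


noncomputable instance (k : ℕ) : DecidableRel (leaningGraph k).Adj :=
  Classical.decRel _

/-- Valid addresses (paths of child indices from the root) in a plane tree. -/
def isAddr : PTree → List ℕ → Prop
  | _, [] => True
  | .node c, i :: is => ∃ h : i < c.length, isAddr (c.get ⟨i, h⟩) is

/-- The graph underlying a plane tree: vertices are node addresses, and edges
join each node to its children. -/
def treeGraph (t : PTree) : SimpleGraph {l : List ℕ // isAddr t l} where
  Adj a b := (∃ i : ℕ, b.1 = a.1 ++ [i]) ∨ (∃ i : ℕ, a.1 = b.1 ++ [i])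
  symm := ⟨fun a b h => h.symm⟩
  loopless := by
    constructor
    intro a h
    rcases h with ⟨i, h⟩ | ⟨i, h⟩ <;> simpa using congrArg List.length h


open scoped MatrixOrder in
theorem Matrix.IsHermitian.sSup_spectrum_le_iff {n : Type*} [Fintype n] [DecidableEq n]
    [Nonempty n] {A : Matrix n n ℝ} (hA : A.IsHermitian) {c : ℝ} :
    sSup (spectrum ℝ A) ≤ c ↔ ∀ x : n → ℝ, x ⬝ᵥ A *ᵥ x ≤ c * (x ⬝ᵥ x) := by
  have hne : (spectrum ℝ A).Nonempty := by
    rw [hA.spectrum_real_eq_range_eigenvalues]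
    exact Set.range_nonempty _
  -- both sides say that `c • 1 - A` is positive semidefinite
  rw [csSup_le_iff finite_real_spectrum.bddAbove hne,
    ← le_algebraMap_iff_spectrum_le hA.isSelfAdjoint, le_iff, posSemidef_iff_dotProduct_mulVec]
  simp only [Algebra.algebraMap_eq_smul_one, sub_mulVec, smul_mulVec, one_mulVec, star_trivial,
    dotProduct_sub, dotProduct_smul, smul_eq_mul, sub_nonneg]
  exact and_iff_right ((isHermitian_one.smul (IsSelfAdjoint.all c)).sub hA)

theorem Function.Injective.dotProduct_extend_zero {V W R : Type*} [Fintype V] [Fintype W]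
    [NonUnitalNonAssocSemiring R] {f : V → W} (hf : Function.Injective f) (x y : V → R) :
    Function.extend f x 0 ⬝ᵥ Function.extend f y 0 = x ⬝ᵥ y := by
  refine (Fintype.sum_of_injective f hf _ _ (fun w hw => ?_) fun v => ?_).symm
  · simp [Function.extend_apply' _ _ _ hw]
  · simp [hf.extend_apply]

namespace SimpleGraph

variable {V W : Type*} [Fintype V] [Fintype W] {G : SimpleGraph V} {H : SimpleGraph W}
  [DecidableRel G.Adj] [DecidableRel H.Adj]

theorem dotProduct_mulVec_adjMatrix_le_abs (x : V → ℝ) :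
    x ⬝ᵥ G.adjMatrix ℝ *ᵥ x ≤ |x| ⬝ᵥ G.adjMatrix ℝ *ᵥ |x| := by
  simp only [dotProduct_mulVec_adjMatrix, Pi.abs_apply, ← abs_mul]
  gcongr with i _ j _
  split_ifs
  exacts [le_abs_self _, le_rfl]

theorem Hom.dotProduct_mulVec_adjMatrix_le (f : G →g H) (hf : Function.Injective f)
    {x : V → ℝ} (hx : 0 ≤ x) :
    x ⬝ᵥ G.adjMatrix ℝ *ᵥ x ≤
      Function.extend f x 0 ⬝ᵥ H.adjMatrix ℝ *ᵥ Function.extend f x 0 := by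
  set y := Function.extend f x 0
  have hyf (v : V) : y (f v) = x v := hf.extend_apply x 0 v
  have hy0 (w : W) (hw : w ∉ Set.range f) : y w = 0 := Function.extend_apply' _ _ _ hw
  simp only [dotProduct_mulVec_adjMatrix]
  calc ∑ u, ∑ v, (if G.Adj u v then x u * x v else 0)
      ≤ ∑ u, ∑ v, (if H.Adj (f u) (f v) then y (f u) * y (f v) else 0) := by
        gcongr with u _ v _
        by_cases huv : G.Adj u v
        · simp [huv, f.map_adj huv, hyf]
        · simp only [huv, if_false]
          split_ifs
          exacts [by simpa only [hyf] using mul_nonneg (hx u) (hx v), le_rfl]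
    _ = ∑ u', ∑ v', (if H.Adj u' v' then y u' * y v' else 0) := by
        refine Fintype.sum_of_injective f hf _ _ (fun u' hu' => ?_) fun u => ?_
        · simp [hy0 u' hu']
        · exact Fintype.sum_of_injective f hf _ _ (fun v' hv' => by simp [hy0 v' hv']) fun _ => rfl

theorem Hom.sSup_spectrum_adjMatrix_le [DecidableEq V] [DecidableEq W] [Nonempty V]
    (f : G →g H) (hf : Function.Injective f) :
    sSup (spectrum ℝ (G.adjMatrix ℝ)) ≤ sSup (spectrum ℝ (H.adjMatrix ℝ)) := by
  have : Nonempty W := .map f ‹_›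
  set μ := sSup (spectrum ℝ (H.adjMatrix ℝ))
  have hμ := (isHermitian_adjMatrix ℝ H).sSup_spectrum_le_iff.mp le_rfl
  rw [(isHermitian_adjMatrix ℝ G).sSup_spectrum_le_iff]
  intro x
  calc x ⬝ᵥ G.adjMatrix ℝ *ᵥ x ≤ |x| ⬝ᵥ G.adjMatrix ℝ *ᵥ |x| := dotProduct_mulVec_adjMatrix_le_abs x
    _ ≤ Function.extend f |x| 0 ⬝ᵥ H.adjMatrix ℝ *ᵥ Function.extend f |x| 0 :=
        f.dotProduct_mulVec_adjMatrix_le hf (abs_nonneg x)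
    _ ≤ μ * (Function.extend f |x| 0 ⬝ᵥ Function.extend f |x| 0) := hμ _
    _ = μ * (x ⬝ᵥ x) := by
        rw [hf.dotProduct_extend_zero]
        simp [dotProduct, abs_mul_abs_self]

end SimpleGraph

-- the Ulam–Harris labels of the nodes on the path `l` below a node labelled `r`
def pathLabels : ℕ → List ℕ → List ℕ
  | _, [] => []
  | r, i :: is => (r + 1 + i) :: pathLabels (r + 1 + i) is

theorem pairwise_cons_pathLabels (r : ℕ) (l : List ℕ) :
    (r :: pathLabels r l).Pairwise (· < ·) := by
  induction l generalizing r with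
  | nil => simp [pathLabels]
  | cons i is ih =>
    refine List.Pairwise.cons (fun m hm => ?_) (ih _)
    rcases List.mem_cons.mp hm with rfl | hm
    · omega
    · exact Nat.lt_trans (by omega) (List.rel_of_pairwise_cons (ih _) hm)

theorem pathLabels_injective (r : ℕ) : Function.Injective (pathLabels r) := by
  intro l₁ l₂ h
  induction l₁ generalizing r l₂ with
  | nil => cases l₂ <;> simp_all [pathLabels]
  | cons i is ih =>
    cases l₂ with
    | nil => simp [pathLabels] at h
    | cons j js =>
      simp only [pathLabels, List.cons.injEq] at h
      obtain rfl : i = j := by omega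
      rw [ih _ h.2]

theorem exists_pathLabels_concat (r : ℕ) (l : List ℕ) (i : ℕ) :
    ∃ m, pathLabels r (l ++ [i]) = pathLabels r l ++ [m] := by
  induction l generalizing r with
  | nil => exact ⟨r + 1 + i, rfl⟩
  | cons j js ih =>
    obtain ⟨m, hm⟩ := ih (r + 1 + j)
    exact ⟨m, by simp [pathLabels, hm]⟩

theorem le_uhL_singleton (r : ℕ) (t : PTree) : r ≤ uhL r [t] := by
  cases t
  simp [uhL]

theorem uhL_getElem_le : ∀ (ts : List PTree) (r i : ℕ) (hi : i < ts.length),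
    uhL (r + i) [ts[i]] ≤ uhL r ts
  | .node c :: _, r, 0, _ => by simp only [uhL, List.getElem_cons_zero, Nat.add_zero]; omega
  | .node c :: ts, r, i + 1, hi => by
    have := uhL_getElem_le ts (r + 1) i (by simpa using hi)
    rw [uhL, List.getElem_cons_succ, ← Nat.add_assoc, Nat.add_right_comm]
    omega

theorem pathLabels_le_uhL : ∀ (t : PTree) (l : List ℕ) (r : ℕ), isAddr t l →
    ∀ m ∈ pathLabels r l, m ≤ uhL r [t]
  | .node c, i :: is, r, ⟨hi, hl⟩, m, hm => by
    have hchild := uhL_getElem_le c (r + 1) i hi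
    have hroot : uhL (r + 1) c ≤ uhL r [.node c] := by simp [uhL]
    rcases List.mem_cons.mp hm with rfl | hm
    · exact (le_uhL_singleton _ _).trans (hchild.trans hroot)
    · exact (pathLabels_le_uhL _ is _ hl m hm).trans (hchild.trans hroot)

-- the paper's relabelling `j ↦ UH - j + 1`, shifted to `Fin (UH - 1)`: a node is sent to the
-- relabelled Ulam–Harris labels of the nodes on its root path, root excluded
def leaningVertex (t : PTree) (a : {l : List ℕ // isAddr t l}) : Finset (Fin (planeUH t - 1)) :=
  {j | planeUH t - j ∈ pathLabels 1 a.1}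

theorem mem_leaningVertex {t : PTree} {a : {l : List ℕ // isAddr t l}} {j : Fin (planeUH t - 1)} :
    j ∈ leaningVertex t a ↔ planeUH t - j ∈ pathLabels 1 a.1 := by
  simp [leaningVertex]

theorem mem_pathLabels_bounds {t : PTree} (a : {l : List ℕ // isAddr t l}) {m : ℕ}
    (hm : m ∈ pathLabels 1 a.1) : 1 < m ∧ m ≤ planeUH t :=
  ⟨List.rel_of_pairwise_cons (pairwise_cons_pathLabels 1 a.1) hm,
    pathLabels_le_uhL t a.1 1 a.2 m hm⟩

theorem mem_leaningVertex_of_mem_pathLabels {t : PTree} {a : {l : List ℕ // isAddr t l}} {m : ℕ}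
    (hm : m ∈ pathLabels 1 a.1) :
    (⟨planeUH t - m, by have := mem_pathLabels_bounds a hm; omega⟩ : Fin (planeUH t - 1)) ∈
      leaningVertex t a := by
  rwa [mem_leaningVertex, Nat.sub_sub_self (mem_pathLabels_bounds a hm).2]

theorem leaningVertex_injective (t : PTree) : Function.Injective (leaningVertex t) := by
  have hsub (a b : {l : List ℕ // isAddr t l}) (hab : leaningVertex t a = leaningVertex t b)
      (m : ℕ) (hm : m ∈ pathLabels 1 a.1) : m ∈ pathLabels 1 b.1 := by
    have := mem_leaningVertex.mp (hab ▸ mem_leaningVertex_of_mem_pathLabels hm)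
    rwa [Nat.sub_sub_self (mem_pathLabels_bounds a hm).2] at this
  intro a b hab
  exact Subtype.ext <| pathLabels_injective 1 <|
    (pairwise_cons_pathLabels 1 a.1).of_cons.eq_of_mem_iff (pairwise_cons_pathLabels 1 b.1).of_cons
      fun m => ⟨hsub a b hab m, hsub b a hab.symm m⟩

theorem leaningVertex_adj_of_eq_concat (t : PTree) (a b : {l : List ℕ // isAddr t l}) (i : ℕ)
    (hab : b.1 = a.1 ++ [i]) : (leaningGraph _).Adj (leaningVertex t a) (leaningVertex t b) := by
  obtain ⟨m, hm⟩ := exists_pathLabels_concat 1 a.1 i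
  have hlt : ∀ k ∈ pathLabels 1 a.1, k < m := by
    have := (pairwise_cons_pathLabels 1 (a.1 ++ [i])).of_cons
    rw [hm, List.pairwise_append] at this
    exact fun k hk => this.2.2 k hk m (List.mem_singleton_self m)
  have hmb : m ∈ pathLabels 1 b.1 := by simp [hab, hm]
  obtain ⟨h1, h2⟩ := mem_pathLabels_bounds b hmb
  refine Or.inl ⟨⟨planeUH t - m, by omega⟩, fun h => ?_, ?_, fun j hj => ?_⟩
  · have := mem_leaningVertex.mp h
    rw [Nat.sub_sub_self h2] at this
    exact (hlt m this).false
  · ext j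
    have := j.2
    simp only [Finset.mem_insert, mem_leaningVertex, hab, hm, List.mem_append,
      List.mem_singleton, Fin.ext_iff]
    rw [or_comm, show planeUH t - j = m ↔ (j : ℕ) = planeUH t - m by omega]
  · have := hlt _ (mem_leaningVertex.mp hj)
    have := j.2
    rw [Fin.lt_def, Fin.val_mk]
    omega

theorem isAddr_nil (t : PTree) : isAddr t [] := by
  cases t; trivial

def treeGraph.homOfConcat (t : PTree) {W : Type*} {H : SimpleGraph W}
    (φ : {l : List ℕ // isAddr t l} → W)
    (hφ : ∀ a b : {l : List ℕ // isAddr t l}, ∀ i, b.1 = a.1 ++ [i] → H.Adj (φ a) (φ b)) :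
    treeGraph t →g H where
  toFun := φ
  map_rel' := by
    rintro a b (⟨i, h⟩ | ⟨i, h⟩)
    exacts [hφ a b i h, (hφ b a i h).symm]

def leaningHom (t : PTree) : treeGraph t →g leaningGraph (planeUH t - 1) :=
  treeGraph.homOfConcat t (leaningVertex t) (leaningVertex_adj_of_eq_concat t)

structure IsAddrEmbedding (t t' : PTree) (F : List ℕ → List ℕ) : Prop where
  mapsTo : Set.MapsTo F {l | isAddr t l} {l | isAddr t' l}
  injOn : Set.InjOn F {l | isAddr t l}
  map_nil : F [] = []
  map_concat : ∀ l i, isAddr t (l ++ [i]) → ∃ j, F (l ++ [i]) = F l ++ [j]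

namespace IsAddrEmbedding

variable {t t' : PTree} {F : List ℕ → List ℕ}

def toHom (hF : IsAddrEmbedding t t' F) : treeGraph t →g treeGraph t' :=
  treeGraph.homOfConcat t (fun a => ⟨F a.1, hF.mapsTo a.2⟩) fun a b i hab => by
    obtain ⟨j, hj⟩ := hF.map_concat a.1 i (hab ▸ b.2)
    exact Or.inl ⟨j, by simp [hab, hj]⟩

theorem toHom_injective (hF : IsAddrEmbedding t t' F) : Function.Injective hF.toHom :=
  fun a b hab => Subtype.ext (hF.injOn a.2 b.2 (congrArg Subtype.val hab))

end IsAddrEmbedding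

def nodeAddrMap {k : ℕ} (σ : Fin k → ℕ) (F : Fin k → List ℕ → List ℕ) : List ℕ → List ℕ
  | [] => []
  | i :: is => if hi : i < k then σ ⟨i, hi⟩ :: F ⟨i, hi⟩ is else []

theorem IsAddrEmbedding.node {c d : List PTree} (σ : Fin c.length ↪ Fin d.length)
    (F : Fin c.length → List ℕ → List ℕ) (hF : ∀ i, IsAddrEmbedding (c.get i) (d.get (σ i)) (F i)) :
    IsAddrEmbedding (.node c) (.node d) (nodeAddrMap (fun i => σ i) F) where
  mapsTo := by
    rintro (_ | ⟨i, is⟩) hl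
    · exact isAddr_nil (.node d)
    · obtain ⟨hi, hl⟩ := hl
      simp only [nodeAddrMap, hi, dif_pos]
      exact ⟨(σ _).2, (hF _).mapsTo hl⟩
  injOn := by
    rintro (_ | ⟨i, is⟩) hl (_ | ⟨j, js⟩) hl' h
    · rfl
    · obtain ⟨hj, -⟩ := hl'
      simp [nodeAddrMap, hj] at h
    · obtain ⟨hi, -⟩ := hl
      simp [nodeAddrMap, hi] at h
    · obtain ⟨hi, hl⟩ := hl
      obtain ⟨hj, hl'⟩ := hl'
      simp only [nodeAddrMap, hi, hj, dif_pos, List.cons.injEq] at h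
      obtain rfl : i = j := by simpa using σ.injective (Fin.ext h.1)
      rw [(hF _).injOn hl hl' h.2]
  map_nil := rfl
  map_concat := by
    rintro (_ | ⟨i, is⟩) x ⟨hi, hl⟩
    · exact ⟨σ ⟨x, hi⟩, by simp [nodeAddrMap, hi, (hF _).map_nil]⟩
    · obtain ⟨j, hj⟩ := (hF ⟨i, hi⟩).map_concat is x hl
      exact ⟨j, by simp [nodeAddrMap, hi, hj]⟩

theorem TEquiv.refl : ∀ t : PTree, TEquiv t t
  | .node c => .node c c c (List.forall₂_same.mpr fun x _ => TEquiv.refl x) (List.Perm.refl c)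
decreasing_by
  have := List.sizeOf_lt_of_mem ‹x ∈ c›
  simp only [PTree.node.sizeOf_spec]
  omega

theorem TEquiv.exists_isAddrEmbedding :
    ∀ t t' : PTree, TEquiv t t' → ∃ F, IsAddrEmbedding t t' F
  | .node c, .node d, .node _ _ l hcl hld => by
    classical
    have hlen := hcl.length_eq
    let σ : Fin c.length ↪ Fin d.length :=
      (finCongr hlen).toEmbedding.trans ⟨hld.idxBij, hld.idxBij_injective⟩
    have hchild (i : Fin c.length) : ∃ F, IsAddrEmbedding (c.get i) (d.get (σ i)) F := by
      have hi : TEquiv (c.get i) (l.get (finCongr hlen i)) := hcl.get i.2 (hlen ▸ i.2)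
      have hσi : d.get (σ i) = l.get (finCongr hlen i) :=
        hld.getElem_idxBij_eq_getElem (finCongr hlen i)
      rw [hσi]
      exact TEquiv.exists_isAddrEmbedding _ _ hi
    choose F hF using hchild
    exact ⟨_, IsAddrEmbedding.node σ F hF⟩
termination_by t => sizeOf t
decreasing_by
  have := List.sizeOf_lt_of_mem (List.get_mem c i)
  simp only [PTree.node.sizeOf_spec]
  omega

theorem stmt17 (t : PTree) {V : Type} [Fintype V] [DecidableEq V]
    (G : SimpleGraph V) [DecidableRel G.Adj] (hiso : Nonempty (G ≃g treeGraph t)) :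
    sSup (spectrum ℝ (G.adjMatrix ℝ)) ≤
      sSup (spectrum ℝ ((leaningGraph (UH t - 1)).adjMatrix ℝ)) := by
  obtain ⟨e⟩ := hiso
  obtain ⟨t', htt', hUH⟩ : UH t ∈ {m | ∃ t', TEquiv t t' ∧ planeUH t' = m} :=
    Nat.sInf_mem ⟨_, t, TEquiv.refl t, rfl⟩
  obtain ⟨F, hF⟩ := TEquiv.exists_isAddrEmbedding t t' htt'
  have : Nonempty V := ⟨e.symm ⟨[], isAddr_nil t⟩⟩
  rw [← hUH]
  exact ((leaningHom t').comp (hF.toHom.comp e.toHom)).sSup_spectrum_adjMatrix_le <|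
    (leaningVertex_injective t').comp (hF.toHom_injective.comp e.injective)
end

section
/- For any tree T with maximum vertex degree Δ and adjacency matrix A, √Δ ≤ λ₁(A) ≤ 2√(Δ−1). -/
/-!
Lower bound: if `r` has degree `Δ`, the vector equal to `√Δ` at `r`, to `1` on its neighbours
and to `0` elsewhere satisfies `A y ≥ √Δ • y` entrywise, so its Rayleigh quotient is at least `√Δ`.

Upper bound: root the tree at `r` and put `x v = t ^ (-dist r v)`. A vertex has at most one
neighbour closer to `r` and all its other neighbours are one step farther, so
`A x ≤ (t + (Δ - 1) / t) • x` for `t ≥ 1`. For a nonnegative symmetric matrix a positive vector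
with `A x ≤ c • x` bounds every eigenvalue by `c` (Collatz–Wielandt), and `t = √(Δ - 1)` gives
`2 √(Δ - 1)`.
-/

open Matrix Finset

namespace Matrix

variable {n : Type*} [Fintype n]

theorem le_of_mulVec_le_smul_of_mulVec_eq_smul {R : Type*} [Field R] [LinearOrder R]
    [IsStrictOrderedRing R] {A : Matrix n n R} (hA : A.IsSymm) (hA₀ : ∀ i j, 0 ≤ A i j)
    {x : n → R} (hx : ∀ i, 0 < x i) {c : R} (hc : A *ᵥ x ≤ c • x)
    {y : n → R} (hy : y ≠ 0) {l : R} (hl : A *ᵥ y = l • y) : l ≤ c := by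
  set z : n → R := fun i => |y i|
  have hz₀ : 0 ≤ z := fun i => abs_nonneg (y i)
  -- `|y|` is a subeigenvector for `l`, and pairing with the supervector `x` separates `l` from `c`
  have hlz : l • z ≤ A *ᵥ z := fun i =>
    calc l * |y i| ≤ |l * y i| :=
          abs_mul l (y i) ▸ mul_le_mul_of_nonneg_right (le_abs_self l) (abs_nonneg _)
      _ = |∑ j, A i j * y j| := by rw [← smul_eq_mul, ← Pi.smul_apply, ← hl]; rfl
      _ ≤ ∑ j, A i j * |y j| := (abs_sum_le_sum_abs _ _).trans_eq
          (sum_congr rfl fun j _ => by rw [abs_mul, abs_of_nonneg (hA₀ i j)])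
  have hxz : 0 < x ⬝ᵥ z := by
    obtain ⟨i, hi⟩ := Function.ne_iff.mp hy
    exact sum_pos' (fun j _ => mul_nonneg (hx j).le (hz₀ j))
      ⟨i, mem_univ i, mul_pos (hx i) (abs_pos.mpr hi)⟩
  refine le_of_mul_le_mul_right ?_ hxz
  calc l * (x ⬝ᵥ z) = x ⬝ᵥ (l • z) := by rw [dotProduct_smul, smul_eq_mul]
    _ ≤ x ⬝ᵥ (A *ᵥ z) := dotProduct_le_dotProduct_of_nonneg_left hlz fun i => (hx i).le
    _ = (A *ᵥ x) ⬝ᵥ z := by rw [dotProduct_mulVec, ← mulVec_transpose, hA.eq]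
    _ ≤ (c • x) ⬝ᵥ z := dotProduct_le_dotProduct_of_nonneg_right hc hz₀
    _ = c * (x ⬝ᵥ z) := by rw [smul_dotProduct, smul_eq_mul]

variable [DecidableEq n]

theorem IsHermitian.sSup_spectrum_le_of_mulVec_le_smul [Nonempty n] {A : Matrix n n ℝ}
    (hA : A.IsHermitian) (hA₀ : ∀ i j, 0 ≤ A i j) {x : n → ℝ} (hx : ∀ i, 0 < x i) {c : ℝ}
    (hc : A *ᵥ x ≤ c • x) : sSup (spectrum ℝ A) ≤ c := by
  rw [hA.spectrum_real_eq_range_eigenvalues]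
  refine csSup_le (Set.range_nonempty _) ?_
  rintro _ ⟨i, rfl⟩
  exact le_of_mulVec_le_smul_of_mulVec_eq_smul (isHermitian_iff_isSymm.mp hA) hA₀ hx hc
    ((WithLp.ofLp_eq_zero (p := 2)).not.mpr <| hA.eigenvectorBasis.orthonormal.ne_zero i)
    (hA.mulVec_eigenvectorBasis i)

theorem IsHermitian.bddAbove_spectrum_real {A : Matrix n n ℝ} (hA : A.IsHermitian) :
    BddAbove (spectrum ℝ A) :=
  (hA.spectrum_real_eq_range_eigenvalues ▸ Set.finite_range _).bddAbove

theorem IsHermitian.dotProduct_mulVec_le_sSup_spectrum_mul {A : Matrix n n ℝ}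
    (hA : A.IsHermitian) (x : n → ℝ) :
    x ⬝ᵥ (A *ᵥ x) ≤ sSup (spectrum ℝ A) * (x ⬝ᵥ x) := by
  set c := sSup (spectrum ℝ A)
  have hB : (algebraMap ℝ (Matrix n n ℝ) c - A).PosSemidef := by
    refine posSemidef_iff_isHermitian_and_spectrum_nonneg.mpr
      ⟨(isHermitian_diagonal _).sub hA, ?_⟩
    rw [← spectrum.singleton_sub_eq]
    rintro _ ⟨_, rfl, l, hl, rfl⟩
    exact sub_nonneg.mpr (le_csSup hA.bddAbove_spectrum_real hl)
  have := hB.dotProduct_mulVec_nonneg x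
  simp only [star_trivial, Algebra.algebraMap_eq_smul_one, sub_mulVec, smul_mulVec,
    one_mulVec, dotProduct_sub, dotProduct_smul, smul_eq_mul] at this
  linarith

theorem IsHermitian.le_sSup_spectrum_of_smul_le_mulVec {A : Matrix n n ℝ} (hA : A.IsHermitian)
    {y : n → ℝ} (hy₀ : 0 ≤ y) (hy : y ≠ 0) {c : ℝ} (hc : c • y ≤ A *ᵥ y) :
    c ≤ sSup (spectrum ℝ A) := by
  have hyy : 0 < y ⬝ᵥ y := (dotProduct_nonneg_of_nonneg hy₀ hy₀).lt_of_ne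
    (Ne.symm (dotProduct_self_eq_zero.not.mpr hy))
  refine le_of_mul_le_mul_right ?_ hyy
  calc c * (y ⬝ᵥ y) = y ⬝ᵥ (c • y) := by rw [dotProduct_smul, smul_eq_mul]
    _ ≤ y ⬝ᵥ (A *ᵥ y) := dotProduct_le_dotProduct_of_nonneg_left hc hy₀
    _ ≤ _ := hA.dotProduct_mulVec_le_sSup_spectrum_mul y

end Matrix

namespace SimpleGraph

variable {V : Type*} {G : SimpleGraph V}

theorem IsTree.eq_penultimate_of_adj_of_dist_add_one_eq (hG : G.IsTree) {r u v : V}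
    {p : G.Walk r v} (hp : p.IsPath) (hadj : G.Adj u v) (hd : G.dist r u + 1 = G.dist r v) :
    u = p.penultimate := by
  classical
  obtain ⟨q, hq, hql⟩ := hG.connected.exists_path_of_dist r u
  have hv : v ∉ q.support := fun hv => by
    have := dist_le (q.takeUntil v hv)
    have := q.length_takeUntil_le_length hv
    omega
  exact hG.isAcyclic.eq_penultimate_of_adj_end hp hadj.symm
    (hG.isAcyclic.mem_support_of_ne_mem_support_of_adj_of_isPath hp hq hadj.symm hv)

theorem IsTree.eq_of_adj_of_dist_add_one_eq (hG : G.IsTree) {r u₁ u₂ v : V}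
    (h₁ : G.Adj u₁ v) (h₂ : G.Adj u₂ v) (hd₁ : G.dist r u₁ + 1 = G.dist r v)
    (hd₂ : G.dist r u₂ + 1 = G.dist r v) : u₁ = u₂ := by
  obtain ⟨p, hp, -⟩ := hG.connected.exists_path_of_dist r v
  rw [hG.eq_penultimate_of_adj_of_dist_add_one_eq hp h₁ hd₁,
    hG.eq_penultimate_of_adj_of_dist_add_one_eq hp h₂ hd₂]

variable [DecidableRel G.Adj]

theorem adjMatrix_nonneg {α : Type*} [Zero α] [One α] [Preorder α] [ZeroLEOneClass α] (i j : V) :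
    0 ≤ G.adjMatrix α i j := by
  rw [adjMatrix_apply]
  split_ifs
  exacts [zero_le_one, le_rfl]

variable [Fintype V]

theorem IsTree.card_filter_dist_add_one_eq_le_one (hG : G.IsTree) (r v : V) :
    #{u ∈ G.neighborFinset v | G.dist r u + 1 = G.dist r v} ≤ 1 :=
  card_le_one.mpr fun _ ha _ hb =>
    hG.eq_of_adj_of_dist_add_one_eq ((G.mem_neighborFinset v _).mp (mem_filter.mp ha).1).symm
      ((G.mem_neighborFinset v _).mp (mem_filter.mp hb).1).symm (mem_filter.mp ha).2
      (mem_filter.mp hb).2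

theorem IsTree.adjMatrix_mulVec_inv_pow_dist_le (hG : G.IsTree) (r : V) {t : ℝ} (ht : 1 ≤ t) :
    G.adjMatrix ℝ *ᵥ (fun v => t⁻¹ ^ G.dist r v) ≤
      (t + ((G.maxDegree : ℝ) - 1) / t) • fun v => t⁻¹ ^ G.dist r v := by
  intro v
  set x : V → ℝ := fun v => t⁻¹ ^ G.dist r v
  have ht₀ : 0 < t := one_pos.trans_le ht
  set P := (G.neighborFinset v).filter fun u => G.dist r u + 1 = G.dist r v
  set C := (G.neighborFinset v).filter fun u => ¬G.dist r u + 1 = G.dist r v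
  have hP : ∀ u ∈ P, x u = t * x v := fun u hu => by
    simp only [x, ← (mem_filter.mp hu).2, pow_succ]
    field_simp
  have hC : ∀ u ∈ C, x u = t⁻¹ * x v := fun u hu => by
    obtain ⟨hu, hd⟩ := mem_filter.mp hu
    have hd' : G.dist r u = G.dist r v + 1 :=
      (hG.dist_eq_dist_add_one_of_adj r ((G.mem_neighborFinset v u).mp hu)).resolve_left
        fun h => hd h.symm
    simp only [x, hd', pow_succ, mul_comm]
  have hPcard : #P ≤ 1 := hG.card_filter_dist_add_one_eq_le_one r v
  have hcard : #P + #C ≤ G.maxDegree := by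
    rw [card_filter_add_card_filter_not, card_neighborFinset_eq_degree]
    exact G.degree_le_maxDegree v
  have hPcard' : (#P : ℝ) ≤ 1 := by exact_mod_cast hPcard
  have hcard' : (#P : ℝ) + #C ≤ G.maxDegree := by exact_mod_cast hcard
  have hinv : t⁻¹ ≤ t := (inv_le_one_of_one_le₀ ht).trans ht
  have hcoeff : #P * t + #C * t⁻¹ ≤ t + ((G.maxDegree : ℝ) - 1) / t := by
    rw [div_eq_mul_inv]
    nlinarith [mul_nonneg (sub_nonneg.mpr hPcard') (sub_nonneg.mpr hinv),
      mul_nonneg (sub_nonneg.mpr hcard') (inv_pos.mpr ht₀).le]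
  calc (G.adjMatrix ℝ *ᵥ x) v = ∑ u ∈ P, x u + ∑ u ∈ C, x u := by
        rw [adjMatrix_mulVec_apply, sum_filter_add_sum_filter_not]
    _ = (#P * t + #C * t⁻¹) * x v := by
        rw [sum_congr rfl hP, sum_congr rfl hC, sum_const, sum_const, nsmul_eq_mul,
          nsmul_eq_mul]
        ring
    _ ≤ (t + ((G.maxDegree : ℝ) - 1) / t) * x v :=
        mul_le_mul_of_nonneg_right hcoeff (pow_pos (inv_pos.mpr ht₀) _).le

variable [DecidableEq V]

theorem IsTree.sSup_spectrum_adjMatrix_le (hG : G.IsTree) {t : ℝ} (ht : 1 ≤ t) :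
    sSup (spectrum ℝ (G.adjMatrix ℝ)) ≤ t + ((G.maxDegree : ℝ) - 1) / t := by
  obtain ⟨r⟩ := hG.connected.nonempty
  have : Nonempty V := ⟨r⟩
  exact (G.isHermitian_adjMatrix ℝ).sSup_spectrum_le_of_mulVec_le_smul adjMatrix_nonneg
    (fun v => pow_pos (inv_pos.mpr (one_pos.trans_le ht)) _)
    (hG.adjMatrix_mulVec_inv_pow_dist_le r ht)

theorem sqrt_degree_le_sSup_spectrum_adjMatrix (v : V) (hv : 0 < G.degree v) :
    √(G.degree v : ℝ) ≤ sSup (spectrum ℝ (G.adjMatrix ℝ)) := by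
  -- the Perron vector of the star formed by `v` and its neighbours
  set y : V → ℝ := fun u => if u = v then √(G.degree v : ℝ) else if G.Adj v u then 1 else 0
  have hyv : y v = √(G.degree v : ℝ) := if_pos rfl
  have hy₀ : 0 ≤ y := fun u => by dsimp only [y]; split_ifs <;> positivity
  have hy : y ≠ 0 := fun h => by
    have := congrFun h v
    rw [hyv, Pi.zero_apply, Real.sqrt_eq_zero (Nat.cast_nonneg _)] at this
    exact hv.ne' (by exact_mod_cast this)
  refine (G.isHermitian_adjMatrix ℝ).le_sSup_spectrum_of_smul_le_mulVec hy₀ hy fun u => ?_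
  rw [Pi.smul_apply, smul_eq_mul, adjMatrix_mulVec_apply]
  by_cases huv : u = v
  · subst huv
    have hnb : ∀ w ∈ G.neighborFinset u, y w = 1 := fun w hw => by
      have hw := (G.mem_neighborFinset u w).mp hw
      simp only [y, if_neg hw.ne', if_pos hw]
    rw [sum_congr rfl hnb, sum_const, card_neighborFinset_eq_degree, nsmul_one, hyv,
      Real.mul_self_sqrt (Nat.cast_nonneg _)]
  by_cases hvu : G.Adj v u
  · have hyu : y u = 1 := by simp only [y, if_neg huv, if_pos hvu]
    rw [hyu, mul_one, ← hyv]
    exact single_le_sum (fun w _ => hy₀ w) ((G.mem_neighborFinset u v).mpr hvu.symm)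
  · have hyu : y u = 0 := by simp only [y, if_neg huv, if_neg hvu]
    rw [hyu, mul_zero]
    exact sum_nonneg fun w _ => hy₀ w

end SimpleGraph

theorem stmt19 {V : Type*} [Fintype V] [DecidableEq V]
    (T : SimpleGraph V) [DecidableRel T.Adj] (hT : T.IsTree)
    (hΔ : 2 ≤ T.maxDegree) :
    Real.sqrt (T.maxDegree : ℝ) ≤ sSup (spectrum ℝ (T.adjMatrix ℝ)) ∧
    sSup (spectrum ℝ (T.adjMatrix ℝ)) ≤ 2 * Real.sqrt ((T.maxDegree : ℝ) - 1) := by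
  have : Nonempty V := hT.connected.nonempty
  obtain ⟨r, hr⟩ := T.exists_maximal_degree_vertex
  have hΔ₁ : 1 ≤ (T.maxDegree : ℝ) - 1 := by
    have : (2 : ℝ) ≤ T.maxDegree := by exact_mod_cast hΔ
    linarith
  have ht : 1 ≤ √((T.maxDegree : ℝ) - 1) := Real.one_le_sqrt.mpr hΔ₁
  refine ⟨hr ▸ T.sqrt_degree_le_sSup_spectrum_adjMatrix r (by omega), ?_⟩
  -- `t + (Δ - 1) / t` is minimised at `t = √(Δ - 1)`
  calc sSup (spectrum ℝ (T.adjMatrix ℝ))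
      ≤ √((T.maxDegree : ℝ) - 1) + ((T.maxDegree : ℝ) - 1) / √((T.maxDegree : ℝ) - 1) :=
        hT.sSup_spectrum_adjMatrix_le ht
    _ = 2 * √((T.maxDegree : ℝ) - 1) := by
        rw [Real.div_sqrt]
        ring
end
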